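/- Let L be a locally compact Hausdorff space and U ⊆ L × L an open extremally antisymmetric set. Then the map f ↦ (the function (x,y) ↦ f(x,y) + f(y,x)) defines a linear isometry from C₀(U) (continuous functions on L × L vanishing at infinity and supported in U) onto the subspace of symmetric functions in C₀(U ∪ Uˢᶜ), where a function g is symmetric if g(x,y) = g(y,x) for all x, y. -/

import Mathlib

/-! Since `U` and its transpose `Uˢᶜ` are disjoint, `f` and `f ∘ Prod.swap` have disjoint supports
when `tsupport f ⊆ U`, so the sup norm of `f + f ∘ Prod.swap` is `max ‖f‖ ‖f‖ = ‖f‖`. Conversely a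
symmetric `g` supported in `U ∪ Uˢᶜ` is the symmetrization of `U.indicator g`, which is continuous
because the disjoint open sets `U` and `Uˢᶜ` cover the support of `g`. -/

open ZeroAtInfty

/-- The functions in `C₀(L × L)` with (closed) support contained in `V`. -/
def suppIn (L : Type*) [TopologicalSpace L] (V : Set (L × L)) :
    Submodule ℝ C₀(L × L, ℝ) where
  carrier := {f | tsupport ⇑f ⊆ V}
  add_mem' := by
    intro f g hf hg
    have h : tsupport ⇑(f + g) ⊆ tsupport ⇑f ∪ tsupport ⇑g := by
      exact tsupport_add (⇑f) (⇑g)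
    exact h.trans (Set.union_subset hf hg)
  zero_mem' := by simp [tsupport]
  smul_mem' := by
    intro c f hf
    have h : tsupport ⇑(c • f) ⊆ tsupport ⇑f := by
      apply closure_mono
      intro x hx
      simp only [ZeroAtInftyContinuousMap.coe_smul, Pi.smul_apply,
        Function.mem_support] at hx ⊢
      intro h0
      exact hx (by simp [h0])
    exact h.trans hf

/-- The symmetric functions in `C₀(L × L)` with support contained in `V`. -/
def symSuppIn (L : Type*) [TopologicalSpace L] (V : Set (L × L)) :
    Submodule ℝ C₀(L × L, ℝ) where
  carrier := {f | tsupport ⇑f ⊆ V ∧ ∀ x y : L, f (x, y) = f (y, x)}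
  add_mem' := by
    intro f g hf hg
    have h : tsupport ⇑(f + g) ⊆ tsupport ⇑f ∪ tsupport ⇑g := by
      exact tsupport_add (⇑f) (⇑g)
    exact ⟨h.trans (Set.union_subset hf.1 hg.1), fun x y => by
      simp [hf.2 x y, hg.2 x y]⟩
  zero_mem' := by simp [tsupport]
  smul_mem' := by
    intro c f hf
    have h : tsupport ⇑(c • f) ⊆ tsupport ⇑f := by
      apply closure_mono
      intro x hx
      simp only [ZeroAtInftyContinuousMap.coe_smul, Pi.smul_apply,
        Function.mem_support] at hx ⊢
      intro h0
      exact hx (by simp [h0])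
    exact ⟨h.trans hf.1, fun x y => by simp [hf.2 x y]⟩


open Set Filter Topology

namespace ZeroAtInftyContinuousMap

variable {α β E : Type*} [TopologicalSpace α] [TopologicalSpace β] [NormedAddCommGroup E]

lemma norm_le_iff {f : C₀(α, E)} {C : ℝ} (hC : 0 ≤ C) : ‖f‖ ≤ C ↔ ∀ x, ‖f x‖ ≤ C := by
  rw [← norm_toBCF_eq_norm]
  exact BoundedContinuousFunction.norm_le hC

lemma norm_apply_le (f : C₀(α, E)) (x : α) : ‖f x‖ ≤ ‖f‖ :=
  (norm_le_iff (norm_nonneg f)).1 le_rfl x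

lemma norm_le_norm_of_forall_norm_apply_le {f g : C₀(α, E)} (h : ∀ x, ‖f x‖ ≤ ‖g x‖) :
    ‖f‖ ≤ ‖g‖ :=
  (norm_le_iff (norm_nonneg g)).2 fun x => (h x).trans (g.norm_apply_le x)

lemma norm_add_eq_max_of_disjoint_support {f g : C₀(α, E)}
    (h : Disjoint (Function.support f) (Function.support g)) : ‖f + g‖ = max ‖f‖ ‖g‖ := by
  have hpt : ∀ x, ‖(f + g) x‖ = max ‖f x‖ ‖g x‖ := fun x => by
    by_cases hfx : f x = 0
    · simp [hfx]
    · have hgx : g x = 0 := Function.notMem_support.1 (h.notMem_of_mem_left hfx)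
      simp [hgx]
  refine le_antisymm ((norm_le_iff (by positivity)).2 fun x => ?_) (max_le ?_ ?_)
  · rw [hpt]
    exact max_le_max (f.norm_apply_le x) (g.norm_apply_le x)
  · exact norm_le_norm_of_forall_norm_apply_le fun x => hpt x ▸ le_max_left _ _
  · exact norm_le_norm_of_forall_norm_apply_le fun x => hpt x ▸ le_max_right _ _

lemma norm_comp_homeomorph (f : C₀(α, E)) (e : β ≃ₜ α) : ‖f.comp e.toCocompactMap‖ = ‖f‖ := by
  refine le_antisymm ((norm_le_iff (norm_nonneg f)).2 fun y => f.norm_apply_le (e y))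
    ((norm_le_iff (norm_nonneg _)).2 fun x => ?_)
  simpa using (f.comp e.toCocompactMap).norm_apply_le (e.symm x)

lemma exists_coe_eq_indicator_of_tsupport_subset_union (g : C₀(α, E)) {V W : Set α}
    (hV : IsOpen V) (hW : IsOpen W) (hVW : Disjoint V W) (hg : tsupport g ⊆ V ∪ W) :
    ∃ f : C₀(α, E), ⇑f = V.indicator g ∧ tsupport f ⊆ V := by
  have hWV : Disjoint W (closure V) := hVW.symm.closure_right hW
  have hcont : Continuous (V.indicator g) := by
    refine g.continuous.indicator fun x hx => image_eq_zero_of_notMem_tsupport fun hxg => ?_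
    rcases hg hxg with hxV | hxW
    · exact hx.2 (by rwa [hV.interior_eq])
    · exact hWV.notMem_of_mem_left hxW hx.1
  have hzero : Tendsto (V.indicator g) (cocompact α) (𝓝 0) :=
    squeeze_zero_norm (fun x => norm_indicator_le_norm_self g x)
      (by simpa using (zero_at_infty g).norm)
  refine ⟨⟨⟨V.indicator g, hcont⟩, hzero⟩, rfl, fun x hx => ?_⟩
  have hx' : x ∈ closure V ∩ tsupport g := by
    refine closure_inter_subset_inter_closure _ _ ?_
    rwa [← support_indicator]
  exact (hg hx'.2).resolve_right fun hxW => hWV.notMem_of_mem_left hxW hx'.1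

end ZeroAtInftyContinuousMap

lemma indicator_add_indicator_swap {α E : Type*} [AddCommMonoid E] {U : Set (α × α)}
    (hanti : Disjoint U (Prod.swap ⁻¹' U)) {g : α × α → E} (hsym : ∀ p, g p.swap = g p)
    (hg : Function.support g ⊆ U ∪ Prod.swap ⁻¹' U) (p : α × α) :
    U.indicator g p + U.indicator g p.swap = g p := by
  by_cases hp : p ∈ U
  · have hps : p.swap ∉ U := hanti.notMem_of_mem_left hp
    simp [hp, hps]
  by_cases hps : p.swap ∈ U
  · simp [hp, hps, hsym]
  · have hgp : g p = 0 := Function.notMem_support.1 fun h => (hg h).elim hp hps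
    simp [hp, hps, hgp]

open ZeroAtInftyContinuousMap

section Symmetrize

variable {L : Type*} [TopologicalSpace L] {U : Set (L × L)}

noncomputable def symmetrize (L : Type*) [TopologicalSpace L] :
    C₀(L × L, ℝ) →ₗ[ℝ] C₀(L × L, ℝ) :=
  LinearMap.id + compLinearMap (Homeomorph.prodComm L L).toCocompactMap

lemma symmetrize_apply (f : C₀(L × L, ℝ)) (p : L × L) : symmetrize L f p = f p + f p.swap :=
  rfl

lemma symmetrize_mem_symSuppIn {f : C₀(L × L, ℝ)} (hf : f ∈ suppIn L U) :
    symmetrize L f ∈ symSuppIn L (U ∪ Prod.swap '' U) := by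
  refine ⟨?_, fun x y => by simp only [symmetrize_apply, Prod.swap_prod_mk, add_comm]⟩
  calc tsupport (symmetrize L f) ⊆ tsupport f ∪ tsupport (f ∘ Homeomorph.prodComm L L) :=
        tsupport_add _ _
    _ = tsupport f ∪ Prod.swap ⁻¹' tsupport f := by rw [tsupport_comp_eq_preimage]; rfl
    _ ⊆ U ∪ Prod.swap '' U := by
        rw [image_swap_eq_preimage_swap]
        exact union_subset_union hf (preimage_mono hf)

lemma norm_symmetrize (hanti : Disjoint U (Prod.swap ⁻¹' U)) {f : C₀(L × L, ℝ)}
    (hf : f ∈ suppIn L U) : ‖symmetrize L f‖ = ‖f‖ := by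
  have hdisj : Disjoint (Function.support f)
      (Function.support (f.comp (Homeomorph.prodComm L L).toCocompactMap)) :=
    hanti.mono ((subset_tsupport f).trans hf) fun p hp =>
      show p.swap ∈ U from hf (subset_tsupport f hp)
  change ‖f + f.comp (Homeomorph.prodComm L L).toCocompactMap‖ = ‖f‖
  rw [norm_add_eq_max_of_disjoint_support hdisj, norm_comp_homeomorph, max_self]

lemma exists_symmetrize_eq (hU : IsOpen U) (hanti : Disjoint U (Prod.swap ⁻¹' U))
    {g : C₀(L × L, ℝ)} (hg : g ∈ symSuppIn L (U ∪ Prod.swap '' U)) :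
    ∃ f ∈ suppIn L U, symmetrize L f = g := by
  obtain ⟨hgU, hsym⟩ := hg
  rw [image_swap_eq_preimage_swap] at hgU
  obtain ⟨f, hfg, hfU⟩ := g.exists_coe_eq_indicator_of_tsupport_subset_union hU
    (hU.preimage continuous_swap) hanti hgU
  refine ⟨f, hfU, ext fun p => ?_⟩
  rw [symmetrize_apply, hfg]
  exact indicator_add_indicator_swap hanti (fun p => (hsym p.1 p.2).symm)
    ((subset_tsupport g).trans hgU) p

noncomputable def symmetrizeLinearIsometry (hanti : Disjoint U (Prod.swap ⁻¹' U)) :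
    suppIn L U →ₗᵢ[ℝ] symSuppIn L (U ∪ Prod.swap '' U) where
  toLinearMap := ((symmetrize L).comp (suppIn L U).subtype).codRestrict _
    fun f => symmetrize_mem_symSuppIn f.2
  norm_map' f := norm_symmetrize hanti f.2

end Symmetrize

theorem stmt9_general {L : Type*} [TopologicalSpace L]
    (U : Set (L × L)) (hU : IsOpen U)
    (hanti : ∀ x y : L, (x, y) ∈ U → (y, x) ∉ U) :
    ∃ Φ : suppIn L U ≃ₗᵢ[ℝ] symSuppIn L (U ∪ Prod.swap '' U),
      ∀ (f : suppIn L U) (x y : L),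
        (Φ f : C₀(L × L, ℝ)) (x, y)
          = (f : C₀(L × L, ℝ)) (x, y) + (f : C₀(L × L, ℝ)) (y, x) := by
  have hanti' : Disjoint U (Prod.swap ⁻¹' U) :=
    disjoint_left.2 fun p hp hps => hanti p.1 p.2 hp hps
  have hsurj : Function.Surjective (symmetrizeLinearIsometry hanti') := by
    rintro ⟨g, hg⟩
    obtain ⟨f, hfU, hfg⟩ := exists_symmetrize_eq hU hanti' hg
    exact ⟨⟨f, hfU⟩, Subtype.ext hfg⟩
  exact ⟨.ofSurjective (F := suppIn L U) (symmetrizeLinearIsometry hanti') hsurj,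
    fun f x y => symmetrize_apply f (x, y)⟩

/-- If `U ⊆ L × L` is an open extremally antisymmetric set, then `f ↦ f + Jf`
(with `Jf(x,y) = f(y,x)`) is a linear isometry from `C₀(U)` onto the symmetric
functions in `C₀(U ∪ Uˢᶜ)`. -/
theorem stmt9 {L : Type*} [TopologicalSpace L] [LocallyCompactSpace L] [T2Space L]
    (U : Set (L × L)) (hU : IsOpen U)
    (hanti : ∀ x y : L, (x, y) ∈ U → (y, x) ∉ U) :
    ∃ Φ : suppIn L U ≃ₗᵢ[ℝ] symSuppIn L (U ∪ Prod.swap '' U),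
      ∀ (f : suppIn L U) (x y : L),
        (Φ f : C₀(L × L, ℝ)) (x, y)
          = (f : C₀(L × L, ℝ)) (x, y) + (f : C₀(L × L, ℝ)) (y, x) :=
  stmt9_general U hU hanti
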